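/- arXiv:1812.11519 — 3 statements merged into one kernel-verified Lean document; each statement's English description precedes it below -/
import Mathlib

section
/- Let u be the convex envelope of f on Ω̄, let x ∈ Ω with u(x) < f(x), and let p be a subgradient of u at x. Then x lies in the convex hull of the set C(f;x,p) = { y ∈ Ω̄ : f(y) = u(x) + p·(y−x) }. -/
open scoped RealInnerProductSpace

/-! If `x` were not in the convex hull of the contact set `K` of the supporting plane
`ℓ y = u x + ⟪p, y - x⟫`, then, because `K` is compact and convex hulls of compact sets are compact
in finite dimension, a continuous linear functional separates `x` from that hull: `φ < c` on `K`
and `c < φ x`. On the compact part of `closure Ω` where `c ≤ φ`, the gap `f - ℓ` is bounded below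
by a positive constant, so `ℓ + ε (φ - c)` is still a convex minorant of `f` for small `ε > 0`.
It exceeds `ℓ x = u x` at `x`, contradicting the maximality of the envelope. -/

open Set

section CaratheodoryCompact

variable {E : Type*} [NormedAddCommGroup E] [NormedSpace ℝ E] [FiniteDimensional ℝ E]

theorem convexHull_eq_biUnion_image_stdSimplex (s : Set E) :
    convexHull ℝ s = ⋃ k ∈ Iic (Module.finrank ℝ E + 1),
      (fun wz : (Fin k → ℝ) × (Fin k → E) => ∑ i, wz.1 i • wz.2 i) ''
        (stdSimplex ℝ (Fin k) ×ˢ univ.pi fun _ => s) := by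
  refine Subset.antisymm (fun x hx => ?_) ?_
  · obtain ⟨ι, _, z, w, hzs, hz, hw0, hw1, rfl⟩ := eq_pos_convex_span_of_mem_convexHull hx
    let e := Fintype.equivFin ι
    refine mem_biUnion (x := Fintype.card ι)
      (hz.card_le_finrank_succ.trans (Nat.add_le_add_right (Submodule.finrank_le _) 1))
      ⟨(w ∘ e.symm, z ∘ e.symm), ⟨⟨fun i => (hw0 _).le, ?_⟩, fun i _ => hzs (mem_range_self _)⟩, ?_⟩
    · simpa [e.symm.sum_comp w] using hw1
    · exact e.symm.sum_comp fun i => w i • z i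
  · simp only [iUnion_subset_iff]
    rintro k - _ ⟨⟨w, z⟩, ⟨⟨hw0, hw1⟩, hz⟩, rfl⟩
    exact (convex_convexHull ℝ s).sum_mem (fun i _ => hw0 i) hw1
      fun i _ => subset_convexHull ℝ s (hz i (mem_univ i))

theorem IsCompact.convexHull {s : Set E} (hs : IsCompact s) : IsCompact (convexHull ℝ s) := by
  rw [convexHull_eq_biUnion_image_stdSimplex]
  refine (finite_Iic _).isCompact_biUnion fun k _ => ?_
  refine ((isCompact_stdSimplex ℝ (Fin k)).prod (isCompact_univ_pi fun _ => hs)).image ?_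
  fun_prop

end CaratheodoryCompact

theorem IsCompact.exists_pos_mul_le_of_pos_on_nonneg {X : Type*} [TopologicalSpace X]
    {S : Set X} (hS : IsCompact S) {g h : X → ℝ} (hg : ContinuousOn g S) (hh : Continuous h)
    (hg0 : ∀ y ∈ S, 0 ≤ g y) (hgh : ∀ y ∈ S, 0 ≤ h y → 0 < g y) :
    ∃ ε > 0, ∀ y ∈ S, ε * h y ≤ g y := by
  obtain ⟨m, hm0, hm⟩ := (hS.inter_right (isClosed_Ici.preimage hh)).exists_forall_le'
    (hg.mono inter_subset_left) fun y hy => hgh y hy.1 hy.2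
  obtain ⟨C, hC⟩ := hS.exists_bound_of_continuousOn hh.continuousOn
  have hC1 : 0 < |C| + 1 := by positivity
  refine ⟨m / (|C| + 1), div_pos hm0 hC1, fun y hy => ?_⟩
  rcases le_or_gt 0 (h y) with hy0 | hy0
  · calc m / (|C| + 1) * h y ≤ m / (|C| + 1) * (|C| + 1) := by
          have hyC : |h y| ≤ C := by simpa using hC y hy
          gcongr
          linarith [le_abs_self (h y), le_abs_self C]
      _ = m := div_mul_cancel₀ m hC1.ne'
      _ ≤ g y := hm y ⟨hy, hy0⟩
  · nlinarith [hg0 y hy, div_pos hm0 hC1]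

theorem ConvexOn.exists_convexOn_le_gt_of_notMem_closedConvexHull {E : Type*}
    [NormedAddCommGroup E] [NormedSpace ℝ E] {S : Set E} (hS : IsCompact S) {f ℓ : E → ℝ}
    (hℓ : ConvexOn ℝ S ℓ) (hf : ContinuousOn f S) (hℓc : ContinuousOn ℓ S)
    (hℓf : ∀ y ∈ S, ℓ y ≤ f y) {x : E} (hx : x ∉ closedConvexHull ℝ {y ∈ S | f y = ℓ y}) :
    ∃ v : E → ℝ, ConvexOn ℝ S v ∧ (∀ y ∈ S, v y ≤ f y) ∧ ℓ x < v x := by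
  obtain ⟨φ, c, hφ, hφx⟩ :=
    geometric_hahn_banach_closed_point convex_closedConvexHull isClosed_closedConvexHull hx
  obtain ⟨ε, hε, hεf⟩ := hS.exists_pos_mul_le_of_pos_on_nonneg (g := fun y => f y - ℓ y)
    (h := fun y => φ y - c) (hf.sub hℓc) (φ.continuous.sub continuous_const)
    (fun y hy => sub_nonneg.2 (hℓf y hy)) fun y hy hcy => by
      refine sub_pos.2 ((hℓf y hy).lt_of_ne fun h => ?_)
      have hφy := hφ y (subset_closedConvexHull ⟨hy, h.symm⟩)
      linarith
  refine ⟨fun y => ℓ y + ε * (φ y - c), ?_, fun y hy => ?_, ?_⟩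
  · refine hℓ.add (((φ.toLinearMap.convexOn hℓ.1).add_const (-c)).smul hε.le |>.congr ?_)
    intro y _
    simp [sub_eq_add_neg]
  · linarith [hεf y hy]
  · nlinarith

theorem mem_convexHull_contact_set_general
    (d : ℕ) (Ω : Set (EuclideanSpace ℝ (Fin d)))
    (hΩc : Convex ℝ Ω) (hΩb : Bornology.IsBounded Ω)
    (f u : EuclideanSpace ℝ (Fin d) → ℝ)
    (hf : ContinuousOn f (closure Ω))
    (hu_le : ∀ x ∈ closure Ω, u x ≤ f x)
    (hu_max : ∀ v : EuclideanSpace ℝ (Fin d) → ℝ, ConvexOn ℝ (closure Ω) v →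
        (∀ x ∈ closure Ω, v x ≤ f x) → ∀ x ∈ closure Ω, v x ≤ u x)
    (x : EuclideanSpace ℝ (Fin d)) (hx : x ∈ Ω)
    (p : EuclideanSpace ℝ (Fin d))
    (hp : ∀ y ∈ closure Ω, u x + ⟪p, y - x⟫ ≤ u y) :
    x ∈ convexHull ℝ {y ∈ closure Ω | f y = u x + ⟪p, y - x⟫} := by
  set ℓ : EuclideanSpace ℝ (Fin d) → ℝ := fun y => u x + ⟪p, y - x⟫
  have hS : IsCompact (closure Ω) := hΩb.isCompact_closure
  have hℓc : Continuous ℓ := by fun_prop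
  have hℓ : ConvexOn ℝ (closure Ω) ℓ :=
    ((innerₛₗ ℝ p).convexOn hΩc.closure).add_const (u x - ⟪p, x⟫) |>.congr fun y _ => by
      simp only [ℓ, Pi.add_apply, innerₛₗ_apply_apply, inner_sub_right]; ring
  have hK : IsCompact {y ∈ closure Ω | f y = ℓ y} := by
    refine hS.of_isClosed_subset ?_ (sep_subset _ _)
    convert (hf.sub hℓc.continuousOn).preimage_isClosed_of_isClosed isClosed_closure
      (isClosed_singleton (x := 0)) using 1
    ext y
    simp [sub_eq_zero]
  by_contra hcon
  rw [← hK.convexHull.isClosed.closure_eq, ← closedConvexHull_eq_closure_convexHull] at hcon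
  obtain ⟨v, hv, hvf, hℓv⟩ := hℓ.exists_convexOn_le_gt_of_notMem_closedConvexHull hS hf
    hℓc.continuousOn (fun y hy => (hp y hy).trans (hu_le y hy)) hcon
  have hvu := hu_max v hv hvf x (subset_closure hx)
  have hℓx : ℓ x = u x := by simp [ℓ]
  linarith

/-- If `u` is the convex envelope of `f`, `x ∈ Ω` with `u x < f x`, and `p` is a
subgradient of `u` at `x`, then `x` lies in the convex hull of
`C(f;x,p) = { y ∈ closure Ω : f y = u x + ⟪p, y - x⟫ }`. -/
theorem mem_convexHull_contact_set
    (d : ℕ) (Ω : Set (EuclideanSpace ℝ (Fin d)))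
    (hΩo : IsOpen Ω) (hΩc : Convex ℝ Ω) (hΩb : Bornology.IsBounded Ω)
    (f u : EuclideanSpace ℝ (Fin d) → ℝ)
    (hf : ContinuousOn f (closure Ω))
    (hu_cvx : ConvexOn ℝ (closure Ω) u)
    (hu_le : ∀ x ∈ closure Ω, u x ≤ f x)
    (hu_max : ∀ v : EuclideanSpace ℝ (Fin d) → ℝ, ConvexOn ℝ (closure Ω) v →
        (∀ x ∈ closure Ω, v x ≤ f x) → ∀ x ∈ closure Ω, v x ≤ u x)
    (x : EuclideanSpace ℝ (Fin d)) (hx : x ∈ Ω) (hlt : u x < f x)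
    (p : EuclideanSpace ℝ (Fin d))
    (hp : ∀ y ∈ closure Ω, u x + ⟪p, y - x⟫ ≤ u y) :
    x ∈ convexHull ℝ {y ∈ closure Ω | f y = u x + ⟪p, y - x⟫} :=
  mem_convexHull_contact_set_general d Ω hΩc hΩb f u hf hu_le hu_max x hx p hp
end

section
/- Suppose Ω is strictly convex (every boundary point of Ω̄ is an extreme point of Ω̄) and f ∈ C(Ω̄). Then the convex envelope u of f satisfies u(x) = f(x) for every x ∈ ∂Ω; i.e., ∂Ω is contained in the contact set C(f). -/
/-!
Since `x₀ ∈ ∂Ω` is an extreme point of the compact convex set `Ω̄`, the function equal to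
`f x₀` at `x₀` and to `min f` elsewhere is convex on `Ω̄` and lies below `f`; hence the
envelope satisfies `f x₀ ≤ u x₀ ≤ f x₀`.
-/

theorem convexOn_update_const_of_mem_extremePoints {𝕜 E : Type*} [Field 𝕜] [LinearOrder 𝕜]
    [IsStrictOrderedRing 𝕜] [AddCommGroup E] [Module 𝕜 E] [DecidableEq E] {s : Set E} {x₀ : E}
    (hs : Convex 𝕜 s) (hx₀ : x₀ ∈ s.extremePoints 𝕜) {m c : 𝕜} (hmc : m ≤ c) :
    ConvexOn 𝕜 s (Function.update (fun _ => m) x₀ c) := by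
  set v : E → 𝕜 := Function.update (fun _ => m) x₀ c
  have hv_ge : ∀ x, m ≤ v x := fun x => by
    rcases eq_or_ne x x₀ with rfl | h <;> simp [v, *]
  refine ⟨hs, fun x hx y hy a b ha hb hab => ?_⟩
  simp only [smul_eq_mul]
  by_cases hcomb : a • x + b • y = x₀
  · rcases ha.eq_or_lt with rfl | ha'
    · obtain rfl : b = 1 := by linarith
      obtain rfl : y = x₀ := by simpa using hcomb
      simp
    rcases hb.eq_or_lt with rfl | hb'
    · obtain rfl : a = 1 := by linarith
      obtain rfl : x = x₀ := by simpa using hcomb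
      simp
    obtain ⟨rfl, rfl⟩ : x = x₀ ∧ y = x₀ :=
      (mem_extremePoints.1 hx₀).2 x hx y hy ⟨a, b, ha', hb', hab, hcomb⟩
    rw [← add_mul, hab, one_mul, hcomb]
  · calc v (a • x + b • y) = a * m + b * m := by
          rw [← add_mul, hab, one_mul]; exact Function.update_of_ne hcomb _ _
      _ ≤ a * v x + b * v y := by gcongr <;> exact hv_ge _

theorem boundary_subset_contact_set_general
    (d : ℕ) (Ω : Set (EuclideanSpace ℝ (Fin d)))
    (hΩc : Convex ℝ Ω) (hΩb : Bornology.IsBounded Ω)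
    (hstrict : ∀ x ∈ frontier Ω, x ∈ Set.extremePoints ℝ (closure Ω))
    (f u : EuclideanSpace ℝ (Fin d) → ℝ)
    (hf : ContinuousOn f (closure Ω))
    (hu_le : ∀ x ∈ closure Ω, u x ≤ f x)
    (hu_max : ∀ v : EuclideanSpace ℝ (Fin d) → ℝ, ConvexOn ℝ (closure Ω) v →
        (∀ x ∈ closure Ω, v x ≤ f x) → ∀ x ∈ closure Ω, v x ≤ u x) :
    ∀ x ∈ frontier Ω, u x = f x := by
  intro x₀ hx₀
  have hx₀K : x₀ ∈ closure Ω := frontier_subset_closure hx₀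
  obtain ⟨z, -, hz_min⟩ := hΩb.isCompact_closure.exists_isMinOn ⟨x₀, hx₀K⟩ hf
  have hv_cvx := convexOn_update_const_of_mem_extremePoints hΩc.closure (hstrict x₀ hx₀)
    (hz_min hx₀K)
  have hv_le : ∀ x ∈ closure Ω, Function.update (fun _ => f z) x₀ (f x₀) x ≤ f x := by
    intro x hx
    rcases eq_or_ne x x₀ with rfl | hne
    · simp
    · simpa [hne] using hz_min hx
  refine le_antisymm (hu_le x₀ hx₀K) ?_
  simpa using hu_max _ hv_cvx hv_le x₀ hx₀K

/-- If `Ω` is strictly convex (every boundary point of `closure Ω` is an extreme point of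
`closure Ω`) and `f` is continuous, then the convex envelope `u` of `f` agrees with `f`
on the boundary `∂Ω`. -/
theorem boundary_subset_contact_set
    (d : ℕ) (Ω : Set (EuclideanSpace ℝ (Fin d)))
    (hΩo : IsOpen Ω) (hΩc : Convex ℝ Ω) (hΩb : Bornology.IsBounded Ω)
    (hstrict : ∀ x ∈ frontier Ω, x ∈ Set.extremePoints ℝ (closure Ω))
    (f u : EuclideanSpace ℝ (Fin d) → ℝ)
    (hf : ContinuousOn f (closure Ω))
    (hu_cvx : ConvexOn ℝ (closure Ω) u)
    (hu_le : ∀ x ∈ closure Ω, u x ≤ f x)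
    (hu_max : ∀ v : EuclideanSpace ℝ (Fin d) → ℝ, ConvexOn ℝ (closure Ω) v →
        (∀ x ∈ closure Ω, v x ≤ f x) → ∀ x ∈ closure Ω, v x ≤ u x) :
    ∀ x ∈ frontier Ω, u x = f x :=
  boundary_subset_contact_set_general d Ω hΩc hΩb hstrict f u hf hu_le hu_max
end

section
/- Let u be the convex envelope of f, suppose f is differentiable at y ∈ Ω with u(y) = f(y), and let p be a subgradient of u at y. Then p = ∇f(y). Consequently, if additionally |∇f(z) − ∇f(y)| ≤ H|z−y|^α for all z, then for every x with the segment [y,x] ⊂ Ω̄, f(x) − u(x) ≤ f(x) − f(y) − ∇f(y)·(x−y) ≤ (H/(1+α)) |x−y|^{1+α}. -/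
/-!
At a contact point, `z ↦ f y + ⟪p, z - y⟫` is an affine minorant of `u ≤ f` that touches `f`
at the interior point `y`, so `z ↦ f z - ⟪p, z⟫` has a local minimum at `y` and its derivative
`∇f(y) - p` vanishes. The first inequality is then the subgradient inequality for `u` at `x`.
For the second, integrate along the segment: the derivative of
`t ↦ f(y + t(x - y)) - t ⟪∇f(y), x - y⟫` is `⟪∇f(y + t(x - y)) - ∇f(y), x - y⟫ ≤ H tᵅ |x - y|^{1+α}`.
-/

open scoped RealInnerProductSpace

open Set

theorem sub_le_div_of_hasDerivAt_le_rpow {φ φ' : ℝ → ℝ} {K α : ℝ} (hα : 0 ≤ α)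
    (hφ : ∀ t ∈ Icc (0 : ℝ) 1, HasDerivAt φ (φ' t) t)
    (hbound : ∀ t ∈ Icc (0 : ℝ) 1, φ' t ≤ K * t ^ α) :
    φ 1 - φ 0 ≤ K / (1 + α) := by
  have hα1 : 1 + α ≠ 0 := by positivity
  have hB : ∀ t : ℝ, HasDerivAt (fun s => K / (1 + α) * s ^ (1 + α)) (K * t ^ α) t := fun t =>
    ((Real.hasDerivAt_rpow_const (x := t) (p := 1 + α) (Or.inr (by linarith))).const_mul
      (K / (1 + α))).congr_deriv (by rw [add_sub_cancel_left]; field_simp)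
  have := image_le_of_deriv_right_le_deriv_boundary (a := 0) (b := 1)
    (f := fun t => φ t - φ 0) (B := fun s => K / (1 + α) * s ^ (1 + α))
    (fun t ht => ((hφ t ht).continuousAt.sub continuousAt_const).continuousWithinAt)
    (fun t ht => ((hφ t (Ico_subset_Icc_self ht)).sub_const _).hasDerivWithinAt)
    (by simp [Real.zero_rpow hα1])
    (fun t _ => (hB t).continuousAt.continuousWithinAt)
    (fun t _ => (hB t).hasDerivWithinAt)
    (fun t ht => hbound t (Ico_subset_Icc_self ht))
    (right_mem_Icc.2 zero_le_one)
  simpa using this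

variable {E : Type*} [NormedAddCommGroup E] [InnerProductSpace ℝ E] [CompleteSpace E]

theorem HasGradientAt.eq_of_eventually_add_inner_le {f : E → ℝ} {g p y : E}
    (hf : HasGradientAt f g y) (hp : ∀ᶠ z in nhds y, f y + ⟪p, z - y⟫ ≤ f z) : p = g := by
  have hmin : IsLocalMin (fun z => f z - ⟪p, z⟫) y := by
    filter_upwards [hp] with z hz
    rw [inner_sub_right] at hz
    linarith
  have hderiv : HasFDerivAt (fun z => f z - ⟪p, z⟫)
      (InnerProductSpace.toDual ℝ E g - InnerProductSpace.toDual ℝ E p) y :=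
    hf.hasFDerivAt.sub (InnerProductSpace.toDual ℝ E p).hasFDerivAt
  have := hmin.hasFDerivAt_eq_zero hderiv
  exact ((InnerProductSpace.toDual ℝ E).injective (sub_eq_zero.1 this)).symm

theorem HasGradientAt.hasDerivAt_comp_add_smul {f : E → ℝ} {g : E} {x y : E} {t : ℝ}
    (hf : HasGradientAt f g (y + t • (x - y))) :
    HasDerivAt (fun s : ℝ => f (y + s • (x - y))) ⟪g, x - y⟫ t := by
  have hγ : HasDerivAt (fun s : ℝ => y + s • (x - y)) (x - y) t := by
    simpa using ((hasDerivAt_id t).smul_const (x - y)).const_add y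
  exact (hf.hasFDerivAt.comp_hasDerivAt t hγ).congr_deriv (by simp)

theorem sub_sub_inner_le_of_holder_gradient {f : E → ℝ} {gf : E → E} {x y : E} {H α : ℝ}
    (hα : 0 ≤ α) (hgrad : ∀ z ∈ segment ℝ y x, HasGradientAt f (gf z) z)
    (hhold : ∀ z ∈ segment ℝ y x, ‖gf z - gf y‖ ≤ H * ‖z - y‖ ^ α) :
    f x - f y - ⟪gf y, x - y⟫ ≤ H / (1 + α) * ‖x - y‖ ^ (1 + α) := by
  set C := ‖x - y‖
  have hmem : ∀ t ∈ Icc (0 : ℝ) 1, y + t • (x - y) ∈ segment ℝ y x := fun t ht => by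
    rw [segment_eq_image']; exact ⟨t, ht, rfl⟩
  have hbound : ∀ t ∈ Icc (0 : ℝ) 1,
      ⟪gf (y + t • (x - y)), x - y⟫ - ⟪gf y, x - y⟫ ≤ H * C ^ (1 + α) * t ^ α := by
    intro t ht
    have hdist : ‖y + t • (x - y) - y‖ = t * C := by
      simp [norm_smul, abs_of_nonneg ht.1, C]
    calc ⟪gf (y + t • (x - y)), x - y⟫ - ⟪gf y, x - y⟫
        = ⟪gf (y + t • (x - y)) - gf y, x - y⟫ := (inner_sub_left _ _ _).symm
      _ ≤ ‖gf (y + t • (x - y)) - gf y‖ * C := real_inner_le_norm _ _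
      _ ≤ H * (t * C) ^ α * C := by
        rw [← hdist]; exact mul_le_mul_of_nonneg_right (hhold _ (hmem t ht)) (norm_nonneg _)
      _ = H * C ^ (1 + α) * t ^ α := by
        rw [Real.mul_rpow ht.1 (norm_nonneg _), Real.rpow_add' (norm_nonneg _) (by positivity),
          Real.rpow_one]
        ring
  have := sub_le_div_of_hasDerivAt_le_rpow hα
    (φ := fun t => f (y + t • (x - y)) - t * ⟪gf y, x - y⟫)
    (fun t ht => (hgrad _ (hmem t ht)).hasDerivAt_comp_add_smul.sub (hasDerivAt_mul_const _))
    hbound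
  simp only [zero_smul, add_zero, one_smul, add_sub_cancel, zero_mul, sub_zero, one_mul] at this
  rw [mul_div_right_comm] at this
  linarith

theorem subgradient_eq_grad_at_contact_general
    (d : ℕ) (Ω : Set (EuclideanSpace ℝ (Fin d)))
    (hΩo : IsOpen Ω)
    (f u : EuclideanSpace ℝ (Fin d) → ℝ)
    (hu_le : ∀ x ∈ closure Ω, u x ≤ f x)
    (y : EuclideanSpace ℝ (Fin d)) (hy : y ∈ Ω)
    (gfy : EuclideanSpace ℝ (Fin d)) (hdiff : HasGradientAt f gfy y)
    (hcontact : u y = f y)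
    (p : EuclideanSpace ℝ (Fin d))
    (hp : ∀ z ∈ closure Ω, u y + ⟪p, z - y⟫ ≤ u z) :
    p = gfy ∧
      ∀ (gf : EuclideanSpace ℝ (Fin d) → EuclideanSpace ℝ (Fin d)) (H α : ℝ),
        0 < α → α ≤ 1 → 0 ≤ H → gf y = gfy →
        (∀ z ∈ closure Ω, HasGradientAt f (gf z) z) →
        (∀ z ∈ closure Ω, ‖gf z - gf y‖ ≤ H * ‖z - y‖ ^ α) →
        ∀ x ∈ closure Ω, segment ℝ y x ⊆ closure Ω →
          f x - u x ≤ f x - f y - ⟪gfy, x - y⟫ ∧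
          f x - f y - ⟪gfy, x - y⟫ ≤ (H / (1 + α)) * ‖x - y‖ ^ (1 + α) := by
  have hpg : p = gfy := by
    refine hdiff.eq_of_eventually_add_inner_le ?_
    filter_upwards [hΩo.mem_nhds hy] with z hz
    have := hp z (subset_closure hz)
    linarith [hu_le z (subset_closure hz)]
  refine ⟨hpg, fun gf H α hα _ _ hgfy hgrad hhold x hx hseg => ⟨?_, ?_⟩⟩
  · linarith [hcontact ▸ hpg ▸ hp x hx]
  · rw [← hgfy]
    exact sub_sub_inner_le_of_holder_gradient hα.le (fun z hz => hgrad z (hseg hz))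
      (fun z hz => hhold z (hseg hz))

/-- At an interior contact point `y` where `f` is differentiable, every subgradient `p`
of the convex envelope `u` equals `∇f(y)`; consequently, if `∇f` is `α`-Hölder with
constant `H`, then for any `x` with `[y,x] ⊆ closure Ω`,
`f(x) - u(x) ≤ f(x) - f(y) - ∇f(y)·(x-y) ≤ (H/(1+α)) |x-y|^{1+α}`. -/
theorem subgradient_eq_grad_at_contact
    (d : ℕ) (Ω : Set (EuclideanSpace ℝ (Fin d)))
    (hΩo : IsOpen Ω) (hΩc : Convex ℝ Ω) (hΩb : Bornology.IsBounded Ω)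
    (f u : EuclideanSpace ℝ (Fin d) → ℝ)
    (hf : ContinuousOn f (closure Ω))
    (hu_cvx : ConvexOn ℝ (closure Ω) u)
    (hu_le : ∀ x ∈ closure Ω, u x ≤ f x)
    (hu_max : ∀ v : EuclideanSpace ℝ (Fin d) → ℝ, ConvexOn ℝ (closure Ω) v →
        (∀ x ∈ closure Ω, v x ≤ f x) → ∀ x ∈ closure Ω, v x ≤ u x)
    (y : EuclideanSpace ℝ (Fin d)) (hy : y ∈ Ω)
    (gfy : EuclideanSpace ℝ (Fin d)) (hdiff : HasGradientAt f gfy y)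
    (hcontact : u y = f y)
    (p : EuclideanSpace ℝ (Fin d))
    (hp : ∀ z ∈ closure Ω, u y + ⟪p, z - y⟫ ≤ u z) :
    p = gfy ∧
      ∀ (gf : EuclideanSpace ℝ (Fin d) → EuclideanSpace ℝ (Fin d)) (H α : ℝ),
        0 < α → α ≤ 1 → 0 ≤ H → gf y = gfy →
        (∀ z ∈ closure Ω, HasGradientAt f (gf z) z) →
        (∀ z ∈ closure Ω, ‖gf z - gf y‖ ≤ H * ‖z - y‖ ^ α) →
        ∀ x ∈ closure Ω, segment ℝ y x ⊆ closure Ω →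
          f x - u x ≤ f x - f y - ⟪gfy, x - y⟫ ∧
          f x - f y - ⟪gfy, x - y⟫ ≤ (H / (1 + α)) * ‖x - y‖ ^ (1 + α) :=
  subgradient_eq_grad_at_contact_general d Ω hΩo f u hu_le y hy gfy hdiff hcontact p hp
end
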